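/- arXiv:1212.4722 — 6 statements merged into one kernel-verified Lean document; each statement's English description precedes it below -/
import Mathlib

section
/- Let n ≥ 1, let V, U ⊆ ℝ^{2n} be open, let F : V → ℝ be C², let x : U → V be C¹, and set y := Y_F ∘ x : U → ℝ^{2n}. Then for every r ∈ U and all indices 1 ≤ i, j ≤ 2n, ω(∂x/∂r_i(r), ∂y/∂r_j(r)) = ω(∂x/∂r_j(r), ∂y/∂r_i(r)). -/
/-- The standard symplectic form on `ℝ^{2n}`, indexed by `Fin n ⊕ Fin n`. -/
noncomputable def sform (n : ℕ) (u v : Fin n ⊕ Fin n → ℝ) : ℝ :=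
  ∑ i : Fin n, (u (Sum.inl i) * v (Sum.inr i) - u (Sum.inr i) * v (Sum.inl i))

/-- The Hamiltonian vector field of `F`. -/
noncomputable def hamVF (n : ℕ) (F : (Fin n ⊕ Fin n → ℝ) → ℝ) (x : Fin n ⊕ Fin n → ℝ) :
    Fin n ⊕ Fin n → ℝ :=
  Sum.elim (fun i => -(fderiv ℝ F x (Pi.single (Sum.inr i) 1)))
    (fun i => fderiv ℝ F x (Pi.single (Sum.inl i) 1))

/-!
The Hamiltonian vector field is `Y_F = J ∘ dF`, where `J = hamVec n` sends a covector `φ` to the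
vector `J φ` with `φ = ω(·, J φ)`. Differentiating `y = J ∘ dF ∘ x` gives
`dy(b) = J (d²F(dx b, ·))`, so `ω(dx a, dy b) = d²F(dx b, dx a)`, which is symmetric in `a, b`
by Schwarz's theorem.
-/

namespace Symplectic

variable {n : ℕ}

noncomputable def hamVec (n : ℕ) : ((Fin n ⊕ Fin n → ℝ) →L[ℝ] ℝ) →L[ℝ] (Fin n ⊕ Fin n → ℝ) :=
  ContinuousLinearMap.pi <| Sum.elim
    (fun i => -ContinuousLinearMap.apply ℝ ℝ (Pi.single (Sum.inr i) 1))
    (fun i => ContinuousLinearMap.apply ℝ ℝ (Pi.single (Sum.inl i) 1))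

@[simp]
theorem hamVec_apply_inl (φ : (Fin n ⊕ Fin n → ℝ) →L[ℝ] ℝ) (i : Fin n) :
    hamVec n φ (Sum.inl i) = -φ (Pi.single (Sum.inr i) 1) :=
  rfl

@[simp]
theorem hamVec_apply_inr (φ : (Fin n ⊕ Fin n → ℝ) →L[ℝ] ℝ) (i : Fin n) :
    hamVec n φ (Sum.inr i) = φ (Pi.single (Sum.inl i) 1) :=
  rfl

theorem sform_hamVec (u : Fin n ⊕ Fin n → ℝ) (φ : (Fin n ⊕ Fin n → ℝ) →L[ℝ] ℝ) :
    sform n u (hamVec n φ) = φ u := by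
  have hφ : ∀ k, φ (Pi.single k (u k)) = u k * φ (Pi.single k 1) := fun k => by
    rw [← smul_eq_mul, ← map_smul, ← Pi.single_smul', smul_eq_mul, mul_one]
  conv_rhs => rw [← Finset.univ_sum_single u, map_sum, Fintype.sum_sum_type]
  simp only [hφ, sform, hamVec_apply_inl, hamVec_apply_inr, ← Finset.sum_add_distrib]
  refine Finset.sum_congr rfl fun i _ => ?_
  ring

theorem hamVF_eq_hamVec_comp (F : (Fin n ⊕ Fin n → ℝ) → ℝ) :
    hamVF n F = hamVec n ∘ fderiv ℝ F := by
  funext x k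
  cases k <;> rfl

theorem hasFDerivAt_hamVF_comp {F : (Fin n ⊕ Fin n → ℝ) → ℝ}
    {x : (Fin n ⊕ Fin n → ℝ) → (Fin n ⊕ Fin n → ℝ)}
    {D : (Fin n ⊕ Fin n → ℝ) →L[ℝ] (Fin n ⊕ Fin n → ℝ)} {r : Fin n ⊕ Fin n → ℝ}
    (hF : DifferentiableAt ℝ (fderiv ℝ F) (x r)) (hx : HasFDerivAt x D r) :
    HasFDerivAt (hamVF n F ∘ x) ((hamVec n).comp ((fderiv ℝ (fderiv ℝ F) (x r)).comp D)) r := by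
  rw [hamVF_eq_hamVec_comp]
  exact (hamVec n).hasFDerivAt.comp r (hF.hasFDerivAt.comp r hx)

theorem sform_fderiv_hamVF_comp_comm {F : (Fin n ⊕ Fin n → ℝ) → ℝ}
    {x : (Fin n ⊕ Fin n → ℝ) → (Fin n ⊕ Fin n → ℝ)} {r : Fin n ⊕ Fin n → ℝ}
    (hF : ContDiffAt ℝ 2 F (x r)) (hx : DifferentiableAt ℝ x r) (a b : Fin n ⊕ Fin n → ℝ) :
    sform n (fderiv ℝ x r a) (fderiv ℝ (hamVF n F ∘ x) r b) =
      sform n (fderiv ℝ x r b) (fderiv ℝ (hamVF n F ∘ x) r a) := by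
  have hdF : DifferentiableAt ℝ (fderiv ℝ F) (x r) :=
    (hF.fderiv_right (m := 1) (by norm_num)).differentiableAt one_ne_zero
  rw [(hasFDerivAt_hamVF_comp hdF hx.hasFDerivAt).fderiv]
  simp only [ContinuousLinearMap.comp_apply, sform_hamVec]
  exact hF.isSymmSndFDerivAt (by simp) _ _

end Symplectic

theorem stmt3_general (n : ℕ)
    (V U : Set (Fin n ⊕ Fin n → ℝ)) (hV : IsOpen V) (hU : IsOpen U)
    (F : (Fin n ⊕ Fin n → ℝ) → ℝ) (hF : ContDiffOn ℝ 2 F V)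
    (x : (Fin n ⊕ Fin n → ℝ) → (Fin n ⊕ Fin n → ℝ)) (hx : ContDiffOn ℝ 1 x U)
    (hxV : ∀ r ∈ U, x r ∈ V)
    (y : (Fin n ⊕ Fin n → ℝ) → (Fin n ⊕ Fin n → ℝ)) (hy : y = (hamVF n F) ∘ x) :
    ∀ r ∈ U, ∀ i j : Fin n ⊕ Fin n,
      sform n (fderiv ℝ x r (Pi.single i 1)) (fderiv ℝ y r (Pi.single j 1)) =
        sform n (fderiv ℝ x r (Pi.single j 1)) (fderiv ℝ y r (Pi.single i 1)) := by
  intro r hr i j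
  subst hy
  exact Symplectic.sform_fderiv_hamVF_comp_comm (hF.contDiffAt (hV.mem_nhds (hxV r hr)))
    ((hx.contDiffAt (hU.mem_nhds hr)).differentiableAt one_ne_zero) _ _

theorem stmt3 (n : ℕ) (hn : 1 ≤ n)
    (V U : Set (Fin n ⊕ Fin n → ℝ)) (hV : IsOpen V) (hU : IsOpen U)
    (F : (Fin n ⊕ Fin n → ℝ) → ℝ) (hF : ContDiffOn ℝ 2 F V)
    (x : (Fin n ⊕ Fin n → ℝ) → (Fin n ⊕ Fin n → ℝ)) (hx : ContDiffOn ℝ 1 x U)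
    (hxV : ∀ r ∈ U, x r ∈ V)
    (y : (Fin n ⊕ Fin n → ℝ) → (Fin n ⊕ Fin n → ℝ)) (hy : y = (hamVF n F) ∘ x) :
    ∀ r ∈ U, ∀ i j : Fin n ⊕ Fin n,
      sform n (fderiv ℝ x r (Pi.single i 1)) (fderiv ℝ y r (Pi.single j 1)) =
        sform n (fderiv ℝ x r (Pi.single j 1)) (fderiv ℝ y r (Pi.single i 1)) :=
  stmt3_general n V U hV hU F hF x hx hxV y hy
end

section
/- Let m, N ≥ 1, let U ⊆ ℝ^m be open, let A : U → GL(N, ℝ) be C¹, and let Γ_k : U → M_N(ℝ) (1 ≤ k ≤ m) be matrix fields. Define Γ̄_k := A^{-1}·Γ_k·A + A^{-1}·∂_k A and Γ̂_k := (Γ_k + Γ̄_k)/2. If for every k and every point of U one has ∂_k(A²) + Γ_k·A² − A²·Γ_k = 0 (i.e. A² is parallel with respect to ∇), then for every k and every point of U, ∂_k A + Γ̂_k·A − A·Γ̂_k = 0 (i.e. A is parallel with respect to the metric connection ∇̂ = (∇ + ∇̄)/2). -/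
/-! With `d = ∂_k A` and `γ = Γ_k`, the product rule turns parallelism of `A²` into
`d A + A d + γ A² - A² γ = 0`. Expanding `Γ̂_k = (γ + A⁻¹ γ A + A⁻¹ d) / 2` gives
`A (d + Γ̂_k A - A Γ̂_k) = (d A + A d + γ A² - A² γ) / 2`, and `A` is invertible. -/

open Matrix

/-- Entrywise partial derivative `∂_k` of a matrix-valued map. -/
noncomputable def pderM {ι κ κ' : Type*} [Fintype ι] [DecidableEq ι] (k : ι)
    (M : (ι → ℝ) → Matrix κ κ' ℝ) (r : ι → ℝ) : Matrix κ κ' ℝ :=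
  Matrix.of fun i j => fderiv ℝ (fun r' => M r' i j) r (Pi.single k 1)

theorem pderM_mul {ι κ μ ν : Type*} [Fintype ι] [DecidableEq ι] [Fintype μ] (k : ι)
    {M : (ι → ℝ) → Matrix κ μ ℝ} {M' : (ι → ℝ) → Matrix μ ν ℝ} {r : ι → ℝ}
    (hM : ∀ i j, DifferentiableAt ℝ (fun r' => M r' i j) r)
    (hM' : ∀ i j, DifferentiableAt ℝ (fun r' => M' r' i j) r) :
    pderM k (fun r' => M r' * M' r') r = pderM k M r * M' r + M r * pderM k M' r := by
  ext i j
  simp only [pderM, of_apply, Matrix.add_apply, mul_apply]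
  rw [fderiv_fun_sum fun l _ => (hM i l).fun_mul (hM' l j)]
  simp only [_root_.sum_apply, fderiv_fun_mul (hM _ _) (hM' _ _), _root_.add_apply,
    _root_.smul_apply, smul_eq_mul, Finset.sum_add_distrib, mul_comm (M' r _ j)]
  exact add_comm _ _

theorem mul_covDeriv_avg_eq_half_covDeriv_sq {R : Type*} [Ring R] [Algebra ℝ R] {a b : R}
    (hab : a * b = 1) (d γ : R) :
    a * (d + (1 / 2 : ℝ) • (γ + (b * γ * a + b * d)) * a
        - a * ((1 / 2 : ℝ) • (γ + (b * γ * a + b * d))))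
      = (1 / 2 : ℝ) • (d * a + a * d + γ * (a * a) - a * a * γ) := by
  have hab' : ∀ x, a * (b * x) = x := fun x => by rw [← mul_assoc, hab, one_mul]
  simp only [mul_add, add_mul, mul_sub, smul_add, smul_sub, mul_smul_comm, smul_mul_assoc,
    mul_assoc, hab']
  module

theorem stmt7_general (m N : ℕ)
    (U : Set (Fin m → ℝ)) (hU : IsOpen U)
    (A : (Fin m → ℝ) → Matrix (Fin N) (Fin N) ℝ)
    (hA : ∀ i j : Fin N, ContDiffOn ℝ 1 (fun r => A r i j) U) (hAinv : ∀ r ∈ U, IsUnit (A r).det)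
    (Γ Γbar Γhat : Fin m → (Fin m → ℝ) → Matrix (Fin N) (Fin N) ℝ)
    (hΓbar : ∀ k r, Γbar k r = (A r)⁻¹ * Γ k r * A r + (A r)⁻¹ * pderM k A r)
    (hΓhat : ∀ k r, Γhat k r = (1 / 2 : ℝ) • (Γ k r + Γbar k r))
    (hpar : ∀ k : Fin m, ∀ r ∈ U,
      pderM k (fun r' => A r' * A r') r + Γ k r * (A r * A r) - (A r * A r) * Γ k r = 0) :
    ∀ k : Fin m, ∀ r ∈ U,
      pderM k A r + Γhat k r * A r - A r * Γhat k r = 0 := by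
  intro k r hr
  have hdiff : ∀ i j, DifferentiableAt ℝ (fun r' => A r' i j) r := fun i j =>
    ((hA i j).differentiableOn one_ne_zero).differentiableAt (hU.mem_nhds hr)
  have hsq := hpar k r hr
  rw [pderM_mul k hdiff hdiff] at hsq
  have hA_mul : A r * (pderM k A r + Γhat k r * A r - A r * Γhat k r) = 0 := by
    rw [hΓhat, hΓbar, mul_covDeriv_avg_eq_half_covDeriv_sq (mul_nonsing_inv _ (hAinv r hr)), hsq,
      smul_zero]
  simpa only [nonsing_inv_mul_cancel_left _ _ (hAinv r hr), mul_zero]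
    using congrArg ((A r)⁻¹ * ·) hA_mul

theorem stmt7 (m N : ℕ) (hm : 1 ≤ m) (hN : 1 ≤ N)
    (U : Set (Fin m → ℝ)) (hU : IsOpen U)
    (A : (Fin m → ℝ) → Matrix (Fin N) (Fin N) ℝ)
    (hA : ∀ i j : Fin N, ContDiffOn ℝ 1 (fun r => A r i j) U) (hAinv : ∀ r ∈ U, IsUnit (A r).det)
    (Γ Γbar Γhat : Fin m → (Fin m → ℝ) → Matrix (Fin N) (Fin N) ℝ)
    (hΓbar : ∀ k r, Γbar k r = (A r)⁻¹ * Γ k r * A r + (A r)⁻¹ * pderM k A r)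
    (hΓhat : ∀ k r, Γhat k r = (1 / 2 : ℝ) • (Γ k r + Γbar k r))
    (hpar : ∀ k : Fin m, ∀ r ∈ U,
      pderM k (fun r' => A r' * A r') r + Γ k r * (A r * A r) - (A r * A r) * Γ k r = 0) :
    ∀ k : Fin m, ∀ r ∈ U,
      pderM k A r + Γhat k r * A r - A r * Γhat k r = 0 :=
  stmt7_general m N U hU A hA hAinv Γ Γbar Γhat hΓbar hΓhat hpar
end

section
/- Let n ≥ 1, let U₁, U₂ ⊆ ℝⁿ be open, and let β : U₁ → ℝ^{2n} and γ : U₂ → ℝ^{2n} be C² Lagrangian maps, i.e. ω(∂β/∂s_i, ∂β/∂s_j) = 0 and ω(∂γ/∂t_i, ∂γ/∂t_j) = 0 for all i, j. Define x(s,t) := (β(s) + γ(t))/2 and y(s,t) := (γ(t) − β(s))/2 on U := U₁ × U₂. Fix (s,t) ∈ U and assume the transversality condition: the vectors ∂β/∂s_1(s), …, ∂β/∂s_n(s), ∂γ/∂t_1(t), …, ∂γ/∂t_n(t) span ℝ^{2n}. Then: (i) the Jacobian Dx(s,t) (with respect to the coordinates (s,t)) is invertible; (ii) ∂y/∂s_i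 = −∂x/∂s_i and ∂y/∂t_j = ∂x/∂t_j for all i, j, i.e. Dy(s,t) = Dx(s,t)·K_{2n}; (iii) the symmetric matrix h with entries h(e_i, e_j) = ω(∂x/∂r_i, ∂y/∂r_j) (r = (s,t)) satisfies ω(∂x/∂s_i, ∂y/∂s_j) = 0, ω(∂x/∂t_i, ∂y/∂t_j) = 0 and ω(∂x/∂s_i, ∂y/∂t_j) = (1/4)·ω(∂β/∂s_i(s), ∂γ/∂t_j(t)) for all i, j. (This is the center-chord improper affine sphere construction: det(Dy·Dx^{-1}) = det K_{2n} = (−1)ⁿ is constant.) -/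
open Matrix

/-- The matrix `K_{2n} = [[−I_n, 0], [0, I_n]]`. -/
noncomputable def Kmat (n : ℕ) : Matrix (Fin n ⊕ Fin n) (Fin n ⊕ Fin n) ℝ :=
  Matrix.fromBlocks (-1) 0 0 1

/-- The Jacobian matrix of a map between finite-dimensional coordinate spaces. -/
noncomputable def jacM {ι κ : Type*} [Fintype ι] [DecidableEq ι] [Fintype κ]
    (g : (ι → ℝ) → (κ → ℝ)) (r : ι → ℝ) : Matrix κ ι ℝ :=
  Matrix.of fun i j => fderiv ℝ g r (Pi.single j 1) i

/-! Both `x` and `y` are linear combinations of `β ∘ pr₁` and `γ ∘ pr₂`, so their partial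
derivatives are `±½ ∂β/∂sᵢ` and `½ ∂γ/∂tⱼ`; this is `Dy = Dx · K` at once. The columns of `Dx`
are thus half the tangent vectors of `β` and `γ`, which span by transversality, so `Dx` is
surjective and hence invertible. Finally, by bilinearity of `ω` the entries of `h` are `¼` times
`−ω(∂β, ∂β) = 0`, `ω(∂γ, ∂γ) = 0` and `ω(∂β, ∂γ)`. -/

section BlockCoordinates

variable {ι κ E : Type*} [Fintype ι] [Fintype κ] [NormedAddCommGroup E] [NormedSpace ℝ E]

theorem DifferentiableAt.hasFDerivAt_comp_funLeft {f : (ι → ℝ) → E} {r : κ → ℝ} {e : ι → κ}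
    (hf : DifferentiableAt ℝ f (r ∘ e)) :
    HasFDerivAt (fun r => f (r ∘ e))
      ((fderiv ℝ f (r ∘ e)).comp (LinearMap.funLeft ℝ ℝ e).toContinuousLinearMap) r :=
  hf.hasFDerivAt.comp r (LinearMap.funLeft ℝ ℝ e).toContinuousLinearMap.hasFDerivAt

theorem Pi.single_comp_of_injective {ι κ M : Type*} [DecidableEq ι] [DecidableEq κ] [Zero M]
    {e : ι → κ} (he : Function.Injective e) (i : ι) (a : M) :
    Pi.single (e i) a ∘ e = Pi.single i a :=
  Function.update_comp_eq_of_injective _ he i a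

theorem Pi.single_comp_of_notMem_range {ι κ M : Type*} [DecidableEq κ] [Zero M]
    {e : ι → κ} {k : κ} (hk : k ∉ Set.range e) (a : M) :
    Pi.single k a ∘ e = 0 :=
  Function.update_comp_eq_of_notMem_range _ a hk

variable {β : (ι → ℝ) → E} {γ : (κ → ℝ) → E} {r : ι ⊕ κ → ℝ}

theorem fderiv_smul_add_smul_apply (a b : ℝ) (hβ : DifferentiableAt ℝ β (r ∘ Sum.inl))
    (hγ : DifferentiableAt ℝ γ (r ∘ Sum.inr)) (v : ι ⊕ κ → ℝ) :
    fderiv ℝ (fun r => a • β (r ∘ Sum.inl) + b • γ (r ∘ Sum.inr)) r v =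
      a • fderiv ℝ β (r ∘ Sum.inl) (v ∘ Sum.inl) + b • fderiv ℝ γ (r ∘ Sum.inr) (v ∘ Sum.inr) := by
  have h : HasFDerivAt (fun r => a • β (r ∘ Sum.inl) + b • γ (r ∘ Sum.inr)) _ r :=
    (hβ.hasFDerivAt_comp_funLeft.const_smul a).add (hγ.hasFDerivAt_comp_funLeft.const_smul b)
  rw [h.fderiv]
  rfl

variable [DecidableEq ι] [DecidableEq κ]

theorem fderiv_smul_add_smul_single_inl (a b : ℝ) (hβ : DifferentiableAt ℝ β (r ∘ Sum.inl))
    (hγ : DifferentiableAt ℝ γ (r ∘ Sum.inr)) (i : ι) :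
    fderiv ℝ (fun r => a • β (r ∘ Sum.inl) + b • γ (r ∘ Sum.inr)) r (Pi.single (Sum.inl i) 1) =
      a • fderiv ℝ β (r ∘ Sum.inl) (Pi.single i 1) := by
  rw [fderiv_smul_add_smul_apply a b hβ hγ, Pi.single_comp_of_injective Sum.inl_injective,
    Pi.single_comp_of_notMem_range (by simp), map_zero, smul_zero, add_zero]

theorem fderiv_smul_add_smul_single_inr (a b : ℝ) (hβ : DifferentiableAt ℝ β (r ∘ Sum.inl))
    (hγ : DifferentiableAt ℝ γ (r ∘ Sum.inr)) (j : κ) :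
    fderiv ℝ (fun r => a • β (r ∘ Sum.inl) + b • γ (r ∘ Sum.inr)) r (Pi.single (Sum.inr j) 1) =
      b • fderiv ℝ γ (r ∘ Sum.inr) (Pi.single j 1) := by
  rw [fderiv_smul_add_smul_apply a b hβ hγ, Pi.single_comp_of_injective Sum.inr_injective,
    Pi.single_comp_of_notMem_range (by simp), map_zero, smul_zero, zero_add]

end BlockCoordinates

theorem jacM_eq_toMatrix' {ι κ : Type*} [Fintype ι] [DecidableEq ι] [Fintype κ]
    (g : (ι → ℝ) → (κ → ℝ)) (r : ι → ℝ) :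
    jacM g r = LinearMap.toMatrix' (fderiv ℝ g r : (ι → ℝ) →ₗ[ℝ] κ → ℝ) := by
  ext i j
  rfl

theorem isUnit_det_jacM_iff {ι : Type*} [Fintype ι] [DecidableEq ι] (g : (ι → ℝ) → (ι → ℝ))
    (r : ι → ℝ) :
    IsUnit (jacM g r).det ↔ LinearMap.range (fderiv ℝ g r : (ι → ℝ) →ₗ[ℝ] ι → ℝ) = ⊤ := by
  rw [jacM_eq_toMatrix', LinearMap.det_toMatrix', ← LinearMap.isUnit_iff_isUnit_det,
    LinearMap.isUnit_iff_range_eq_top]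

theorem mul_Kmat_apply_inl {m : Type*} {n : ℕ} (M : Matrix m (Fin n ⊕ Fin n) ℝ) (k : m)
    (i : Fin n) :
    (M * Kmat n) k (Sum.inl i) = -M k (Sum.inl i) := by
  simp [Kmat, Matrix.mul_apply, Fintype.sum_sum_type, Matrix.one_apply]

theorem mul_Kmat_apply_inr {m : Type*} {n : ℕ} (M : Matrix m (Fin n ⊕ Fin n) ℝ) (k : m)
    (j : Fin n) :
    (M * Kmat n) k (Sum.inr j) = M k (Sum.inr j) := by
  simp [Kmat, Matrix.mul_apply, Fintype.sum_sum_type, Matrix.one_apply]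

theorem jacM_eq_jacM_mul_Kmat {n : ℕ} {f g : (Fin n ⊕ Fin n → ℝ) → (Fin n ⊕ Fin n → ℝ)}
    {r : Fin n ⊕ Fin n → ℝ}
    (h_inl : ∀ i, fderiv ℝ g r (Pi.single (Sum.inl i) 1) = -fderiv ℝ f r (Pi.single (Sum.inl i) 1))
    (h_inr : ∀ j, fderiv ℝ g r (Pi.single (Sum.inr j) 1) = fderiv ℝ f r (Pi.single (Sum.inr j) 1)) :
    jacM g r = jacM f r * Kmat n := by
  ext k (i | j)
  · rw [mul_Kmat_apply_inl]
    simp [jacM, h_inl]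
  · rw [mul_Kmat_apply_inr]
    simp [jacM, h_inr]

theorem sform_smul_smul (n : ℕ) (a b : ℝ) (u v : Fin n ⊕ Fin n → ℝ) :
    sform n (a • u) (b • v) = a * b * sform n u v := by
  simp only [sform, Pi.smul_apply, smul_eq_mul, Finset.mul_sum]
  exact Finset.sum_congr rfl fun i _ => by ring

theorem stmt10_general (n : ℕ)
    (U₁ U₂ : Set (Fin n → ℝ)) (hU₁ : IsOpen U₁) (hU₂ : IsOpen U₂)
    (β γ : (Fin n → ℝ) → (Fin n ⊕ Fin n → ℝ))
    (hβ : ContDiffOn ℝ 2 β U₁) (hγ : ContDiffOn ℝ 2 γ U₂)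
    -- `β` and `γ` are Lagrangian
    (hβL : ∀ s ∈ U₁, ∀ i j : Fin n,
      sform n (fderiv ℝ β s (Pi.single i 1)) (fderiv ℝ β s (Pi.single j 1)) = 0)
    (hγL : ∀ t ∈ U₂, ∀ i j : Fin n,
      sform n (fderiv ℝ γ t (Pi.single i 1)) (fderiv ℝ γ t (Pi.single j 1)) = 0)
    -- the center `x` and mid-chord `y`, as functions of `r = (s,t)`
    (x y : (Fin n ⊕ Fin n → ℝ) → (Fin n ⊕ Fin n → ℝ))
    (hxdef : ∀ r, x r = (1 / 2 : ℝ) • (β (r ∘ Sum.inl) + γ (r ∘ Sum.inr)))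
    (hydef : ∀ r, y r = (1 / 2 : ℝ) • (γ (r ∘ Sum.inr) - β (r ∘ Sum.inl)))
    -- a fixed point `(s,t) ∈ U₁ × U₂`
    (s t : Fin n → ℝ) (hs : s ∈ U₁) (ht : t ∈ U₂)
    -- transversality: the tangent vectors of `β` at `s` and of `γ` at `t` span `ℝ^{2n}`
    (htrans : Submodule.span ℝ
      ((Set.range fun i : Fin n => fderiv ℝ β s (Pi.single i 1)) ∪
        (Set.range fun j : Fin n => fderiv ℝ γ t (Pi.single j 1))) = ⊤) :
    -- (i) the Jacobian of `x` at `r = (s,t)` is invertible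
    IsUnit (jacM x (Sum.elim s t)).det ∧
    -- (ii) `∂y/∂s_i = −∂x/∂s_i`, `∂y/∂t_j = ∂x/∂t_j`, i.e. `Dy = Dx · K_{2n}`
    (∀ i : Fin n,
      fderiv ℝ y (Sum.elim s t) (Pi.single (Sum.inl i) 1) =
        -fderiv ℝ x (Sum.elim s t) (Pi.single (Sum.inl i) 1)) ∧
    (∀ j : Fin n,
      fderiv ℝ y (Sum.elim s t) (Pi.single (Sum.inr j) 1) =
        fderiv ℝ x (Sum.elim s t) (Pi.single (Sum.inr j) 1)) ∧
    jacM y (Sum.elim s t) = jacM x (Sum.elim s t) * Kmat n ∧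
    -- (iii) the Blaschke metric `h`
    (∀ i j : Fin n,
      sform n (fderiv ℝ x (Sum.elim s t) (Pi.single (Sum.inl i) 1))
        (fderiv ℝ y (Sum.elim s t) (Pi.single (Sum.inl j) 1)) = 0) ∧
    (∀ i j : Fin n,
      sform n (fderiv ℝ x (Sum.elim s t) (Pi.single (Sum.inr i) 1))
        (fderiv ℝ y (Sum.elim s t) (Pi.single (Sum.inr j) 1)) = 0) ∧
    (∀ i j : Fin n,
      sform n (fderiv ℝ x (Sum.elim s t) (Pi.single (Sum.inl i) 1))
        (fderiv ℝ y (Sum.elim s t) (Pi.single (Sum.inr j) 1)) =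
      (1 / 4 : ℝ) * sform n (fderiv ℝ β s (Pi.single i 1)) (fderiv ℝ γ t (Pi.single j 1))) := by
  have hβs : DifferentiableAt ℝ β (Sum.elim s t ∘ Sum.inl) :=
    (hβ.contDiffAt (hU₁.mem_nhds hs)).differentiableAt two_ne_zero
  have hγt : DifferentiableAt ℝ γ (Sum.elim s t ∘ Sum.inr) :=
    (hγ.contDiffAt (hU₂.mem_nhds ht)).differentiableAt two_ne_zero
  have hx : x = fun r => (1 / 2 : ℝ) • β (r ∘ Sum.inl) + (1 / 2 : ℝ) • γ (r ∘ Sum.inr) :=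
    funext fun r => by rw [hxdef, smul_add]
  have hy : y = fun r => (-(1 / 2) : ℝ) • β (r ∘ Sum.inl) + (1 / 2 : ℝ) • γ (r ∘ Sum.inr) :=
    funext fun r => by rw [hydef]; module
  have hx_inl (i : Fin n) : fderiv ℝ x (Sum.elim s t) (Pi.single (Sum.inl i) 1) =
      (1 / 2 : ℝ) • fderiv ℝ β s (Pi.single i 1) := by
    rw [hx, fderiv_smul_add_smul_single_inl _ _ hβs hγt, Sum.elim_comp_inl]
  have hx_inr (j : Fin n) : fderiv ℝ x (Sum.elim s t) (Pi.single (Sum.inr j) 1) =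
      (1 / 2 : ℝ) • fderiv ℝ γ t (Pi.single j 1) := by
    rw [hx, fderiv_smul_add_smul_single_inr _ _ hβs hγt, Sum.elim_comp_inr]
  have hy_inl (i : Fin n) : fderiv ℝ y (Sum.elim s t) (Pi.single (Sum.inl i) 1) =
      -fderiv ℝ x (Sum.elim s t) (Pi.single (Sum.inl i) 1) := by
    rw [hx_inl, hy, fderiv_smul_add_smul_single_inl _ _ hβs hγt, Sum.elim_comp_inl, neg_smul]
  have hy_inr (j : Fin n) : fderiv ℝ y (Sum.elim s t) (Pi.single (Sum.inr j) 1) =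
      fderiv ℝ x (Sum.elim s t) (Pi.single (Sum.inr j) 1) := by
    rw [hx_inr, hy, fderiv_smul_add_smul_single_inr _ _ hβs hγt, Sum.elim_comp_inr]
  refine ⟨?_, hy_inl, hy_inr, jacM_eq_jacM_mul_Kmat hy_inl hy_inr, fun i j => ?_, fun i j => ?_,
    fun i j => ?_⟩
  · rw [isUnit_det_jacM_iff, eq_top_iff, ← htrans, Submodule.span_le]
    rintro _ (⟨i, rfl⟩ | ⟨j, rfl⟩)
    · exact ⟨(2 : ℝ) • Pi.single (Sum.inl i) 1, by simp [hx_inl, smul_smul]⟩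
    · exact ⟨(2 : ℝ) • Pi.single (Sum.inr j) 1, by simp [hx_inr, smul_smul]⟩
  · rw [hy_inl, hx_inl, hx_inl, ← neg_smul, sform_smul_smul, hβL s hs i j, mul_zero]
  · rw [hy_inr, hx_inr, hx_inr, sform_smul_smul, hγL t ht i j, mul_zero]
  · rw [hy_inr, hx_inl, hx_inr, sform_smul_smul]
    norm_num

theorem stmt10 (n : ℕ) (hn : 1 ≤ n)
    (U₁ U₂ : Set (Fin n → ℝ)) (hU₁ : IsOpen U₁) (hU₂ : IsOpen U₂)
    (β γ : (Fin n → ℝ) → (Fin n ⊕ Fin n → ℝ))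
    (hβ : ContDiffOn ℝ 2 β U₁) (hγ : ContDiffOn ℝ 2 γ U₂)
    -- `β` and `γ` are Lagrangian
    (hβL : ∀ s ∈ U₁, ∀ i j : Fin n,
      sform n (fderiv ℝ β s (Pi.single i 1)) (fderiv ℝ β s (Pi.single j 1)) = 0)
    (hγL : ∀ t ∈ U₂, ∀ i j : Fin n,
      sform n (fderiv ℝ γ t (Pi.single i 1)) (fderiv ℝ γ t (Pi.single j 1)) = 0)
    -- the center `x` and mid-chord `y`, as functions of `r = (s,t)`
    (x y : (Fin n ⊕ Fin n → ℝ) → (Fin n ⊕ Fin n → ℝ))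
    (hxdef : ∀ r, x r = (1 / 2 : ℝ) • (β (r ∘ Sum.inl) + γ (r ∘ Sum.inr)))
    (hydef : ∀ r, y r = (1 / 2 : ℝ) • (γ (r ∘ Sum.inr) - β (r ∘ Sum.inl)))
    -- a fixed point `(s,t) ∈ U₁ × U₂`
    (s t : Fin n → ℝ) (hs : s ∈ U₁) (ht : t ∈ U₂)
    -- transversality: the tangent vectors of `β` at `s` and of `γ` at `t` span `ℝ^{2n}`
    (htrans : Submodule.span ℝ
      ((Set.range fun i : Fin n => fderiv ℝ β s (Pi.single i 1)) ∪
        (Set.range fun j : Fin n => fderiv ℝ γ t (Pi.single j 1))) = ⊤) :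
    -- (i) the Jacobian of `x` at `r = (s,t)` is invertible
    IsUnit (jacM x (Sum.elim s t)).det ∧
    -- (ii) `∂y/∂s_i = −∂x/∂s_i`, `∂y/∂t_j = ∂x/∂t_j`, i.e. `Dy = Dx · K_{2n}`
    (∀ i : Fin n,
      fderiv ℝ y (Sum.elim s t) (Pi.single (Sum.inl i) 1) =
        -fderiv ℝ x (Sum.elim s t) (Pi.single (Sum.inl i) 1)) ∧
    (∀ j : Fin n,
      fderiv ℝ y (Sum.elim s t) (Pi.single (Sum.inr j) 1) =
        fderiv ℝ x (Sum.elim s t) (Pi.single (Sum.inr j) 1)) ∧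
    jacM y (Sum.elim s t) = jacM x (Sum.elim s t) * Kmat n ∧
    -- (iii) the Blaschke metric `h`
    (∀ i j : Fin n,
      sform n (fderiv ℝ x (Sum.elim s t) (Pi.single (Sum.inl i) 1))
        (fderiv ℝ y (Sum.elim s t) (Pi.single (Sum.inl j) 1)) = 0) ∧
    (∀ i j : Fin n,
      sform n (fderiv ℝ x (Sum.elim s t) (Pi.single (Sum.inr i) 1))
        (fderiv ℝ y (Sum.elim s t) (Pi.single (Sum.inr j) 1)) = 0) ∧
    (∀ i j : Fin n,
      sform n (fderiv ℝ x (Sum.elim s t) (Pi.single (Sum.inl i) 1))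
        (fderiv ℝ y (Sum.elim s t) (Pi.single (Sum.inr j) 1)) =
      (1 / 4 : ℝ) * sform n (fderiv ℝ β s (Pi.single i 1)) (fderiv ℝ γ t (Pi.single j 1))) :=
  stmt10_general n U₁ U₂ hU₁ hU₂ β γ hβ hγ hβL hγL x y hxdef hydef s t hs ht htrans
end

section
/- Let n ≥ 1, let U ⊆ ℂⁿ be open, let H : U → ℂ be holomorphic, define Q(s,t) := Im H(s + it) on W := {(s,t) ∈ ℝⁿ × ℝⁿ : s + it ∈ U}, and set x(s,t) := (s, ∂Q/∂t(s,t)), y(s,t) := (t, ∂Q/∂s(s,t)). Define η := x + i·y : W → ℂ^{2n}. Then: (i) η satisfies the Cauchy–Riemann equations ∂η/∂t_j = i·∂η/∂s_j on W for every j (so η is a holomorphic function of z = s + it); and (ii) the image of η is Lagrangian for the complex-bilinear extension ω_ℂ of ω: for all j, k and all points of W, ω_ℂ(∂η/∂s_j, ∂η/∂s_k) = 0. (This expresses that special improper affine spheres arise from the rotated center-chord transform of a pair of complex conjugate Lagrangian submanifolds.) -/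
/-- The complex-bilinear extension `ω_ℂ` of the standard symplectic form to `ℂ^{2n}`. -/
noncomputable def sformC (n : ℕ) (u v : Fin n ⊕ Fin n → ℂ) : ℂ :=
  ∑ i : Fin n, (u (Sum.inl i) * v (Sum.inr i) - u (Sum.inr i) * v (Sum.inl i))

/-!
Since `∂Q/∂t = Re ∂H` and `∂Q/∂s = Im ∂H`, the map `η` is `z ↦ (z, ∇H(z))` composed with
`(s, t) ↦ s + it`. Its real derivative is therefore complex linear, which is the Cauchy–Riemann
system, and `ω_ℂ` evaluated on two of its tangent vectors is the antisymmetrisation of the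
complex Hessian of `H`, which vanishes.

The analytic input is that the derivative of a holomorphic function of several variables is
again holomorphic. Along each complex line, `fderiv f z v` is given by Cauchy's integral formula
over a fixed circle; this integral can be differentiated in `z` under the integral sign, with
Cauchy's estimate for `fderiv f` as the dominating bound.
-/

open Metric Complex MeasureTheory Real Topology

theorem differentiableAt_clm_of_forall_apply {𝕜 D E F : Type*} [NontriviallyNormedField 𝕜]
    [CompleteSpace 𝕜] [NormedAddCommGroup D] [NormedSpace 𝕜 D] [NormedAddCommGroup E]
    [NormedSpace 𝕜 E] [FiniteDimensional 𝕜 E] [NormedAddCommGroup F] [NormedSpace 𝕜 F]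
    {φ : D → E →L[𝕜] F} {x : D} (h : ∀ y, DifferentiableAt 𝕜 (fun z => φ z y) x) :
    DifferentiableAt 𝕜 φ x := by
  let d := Module.finrank 𝕜 E
  have hd : d = Module.finrank 𝕜 (Fin d → 𝕜) := (Module.finrank_fin_fun 𝕜).symm
  let e := ((ContinuousLinearEquiv.ofFinrankEq hd).arrowCongr (1 : F ≃L[𝕜] F)).trans
    (ContinuousLinearEquiv.piRing (Fin d))
  rw [← e.comp_differentiableAt_iff]
  exact differentiableAt_pi.2 fun i => h _

section Osgood

variable {E : Type*} [NormedAddCommGroup E] [NormedSpace ℂ E] {f : E → ℂ}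

theorem hasDerivAt_comp_add_smul {z v : E} {θ : ℂ} (hf : DifferentiableAt ℂ f (z + θ • v)) :
    HasDerivAt (fun θ : ℂ => f (z + θ • v)) (fderiv ℂ f (z + θ • v) v) θ := by
  have hline : HasDerivAt (fun θ : ℂ => z + θ • v) v θ := by
    simpa using ((hasDerivAt_id θ).smul_const v).const_add z
  exact hf.hasFDerivAt.comp_hasDerivAt θ hline

theorem deriv_comp_add_smul_zero {z v : E} (hf : DifferentiableAt ℂ f z) :
    deriv (fun θ : ℂ => f (z + θ • v)) 0 = fderiv ℂ f z v := by
  simpa using (hasDerivAt_comp_add_smul (θ := 0) (v := v) (by simpa using hf)).deriv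

theorem differentiableOn_comp_add_smul {s : Set E} {t : Set ℂ} {z v : E}
    (hf : DifferentiableOn ℂ f s) (hts : ∀ θ ∈ t, z + θ • v ∈ s) :
    DifferentiableOn ℂ (fun θ : ℂ => f (z + θ • v)) t :=
  hf.comp ((differentiable_id.smul_const v).const_add z).differentiableOn hts

/-- Cauchy's estimate, from the one-variable estimate on each complex line through `z`. -/
theorem norm_fderiv_le_of_forall_mem_closedBall_norm_le {z : E} {ρ M : ℝ} (hρ : 0 < ρ)
    (hf : DifferentiableOn ℂ f (closedBall z ρ)) (hM : ∀ w ∈ closedBall z ρ, ‖f w‖ ≤ M) :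
    ‖fderiv ℂ f z‖ ≤ M / ρ := by
  have hM0 : 0 ≤ M := (norm_nonneg _).trans (hM z (mem_closedBall_self hρ.le))
  refine ContinuousLinearMap.opNorm_le_bound _ (div_nonneg hM0 hρ.le) fun v => ?_
  rcases eq_or_ne v 0 with rfl | hv
  · simp
  have hv : 0 < ‖v‖ := norm_pos_iff.2 hv
  have hr : 0 < ρ / ‖v‖ := div_pos hρ hv
  have hline : ∀ θ ∈ closedBall (0 : ℂ) (ρ / ‖v‖), z + θ • v ∈ closedBall z ρ := by
    intro θ hθ
    rw [mem_closedBall, dist_self_add_left, norm_smul, ← le_div_iff₀ hv]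
    simpa using hθ
  have hslice : DiffContOnCl ℂ (fun θ : ℂ => f (z + θ • v)) (ball 0 (ρ / ‖v‖)) := by
    apply DifferentiableOn.diffContOnCl
    rw [closure_ball _ hr.ne']
    exact differentiableOn_comp_add_smul hf hline
  have hcauchy := Complex.norm_deriv_le_of_forall_mem_sphere_norm_le hr hslice
    fun θ hθ => hM _ (hline θ (sphere_subset_closedBall hθ))
  rw [deriv_comp_add_smul_zero (hf.differentiableAt (closedBall_mem_nhds z hρ))] at hcauchy
  calc ‖fderiv ℂ f z v‖ ≤ M / (ρ / ‖v‖) := hcauchy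
    _ = M / ρ * ‖v‖ := by field_simp

theorem fderiv_apply_eq_circleIntegral {U : Set E} (hU : IsOpen U) (hf : DifferentiableOn ℂ f U)
    {z v : E} {R : ℝ} (hR : 0 < R) (hline : ∀ θ ∈ closedBall (0 : ℂ) R, z + θ • v ∈ U) :
    fderiv ℂ f z v = (2 * π * I : ℂ)⁻¹ • ∮ θ in C(0, R), (θ ^ 2)⁻¹ • f (z + θ • v) := by
  have hopen : IsOpen {θ : ℂ | z + θ • v ∈ U} :=
    hU.preimage (continuous_const.add (continuous_id.smul continuous_const))
  have hz : z ∈ U := by simpa using hline 0 (mem_closedBall_self hR.le)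
  rw [← deriv_comp_add_smul_zero (hf.differentiableAt (hU.mem_nhds hz)),
    ← two_pi_I_inv_smul_circleIntegral_sub_sq_inv_smul_of_differentiable hopen hline
      (differentiableOn_comp_add_smul hf fun _ h => h) (mem_ball_self hR)]
  simp only [sub_zero]

theorem hasFDerivAt_circleIntegral_comp_add_smul [FiniteDimensional ℂ E] {U : Set E}
    (hU : IsOpen U) (hf : DifferentiableOn ℂ f U) {s : Set E} {z₀ v : E} (hs : s ∈ 𝓝 z₀)
    {R C : ℝ} (hR : 0 < R) (hsU : ∀ z ∈ s, ∀ θ ∈ sphere (0 : ℂ) R, z + θ • v ∈ U)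
    (hC : ∀ z ∈ s, ∀ θ ∈ sphere (0 : ℂ) R, ‖fderiv ℂ f (z + θ • v)‖ ≤ C) :
    HasFDerivAt (fun z => ∮ θ in C(0, R), (θ ^ 2)⁻¹ • f (z + θ • v))
      (∮ θ in C(0, R), (θ ^ 2)⁻¹ • fderiv ℂ f (z₀ + θ • v)) z₀ := by
  let _ : MeasurableSpace E := borel E
  have : BorelSpace E := ⟨rfl⟩
  have hγ : ∀ θ : ℝ, circleMap 0 R θ ∈ sphere (0 : ℂ) R := fun θ => by
    simp [abs_of_pos hR]
  have hline : ∀ z : E, Continuous fun θ : ℝ => z + circleMap 0 R θ • v := fun z =>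
    continuous_const.add ((continuous_circleMap 0 R).smul continuous_const)
  have hweight : Continuous fun θ : ℝ => deriv (circleMap 0 R) θ • (circleMap 0 R θ ^ 2)⁻¹ := by
    simp only [deriv_circleMap]
    exact ((continuous_circleMap 0 R).mul continuous_const).smul
      (((continuous_circleMap 0 R).pow 2).inv₀ fun θ => pow_ne_zero _ (circleMap_ne_center hR.ne'))
  have hnorm : ∀ θ : ℝ, ‖deriv (circleMap 0 R) θ • (circleMap 0 R θ ^ 2)⁻¹‖ = R⁻¹ := fun θ => by
    simp [deriv_circleMap, abs_of_pos hR]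
    field_simp
  simp only [circleIntegral, ← smul_assoc]
  apply intervalIntegral.hasFDerivAt_integral_of_dominated_of_fderiv_le
    (bound := fun _ => R⁻¹ * C) hs
  · filter_upwards [hs] with z hz
    exact (hweight.smul (hf.continuousOn.comp_continuous (hline z)
      fun θ => hsU z hz _ (hγ θ))).aestronglyMeasurable
  · exact (hweight.smul (hf.continuousOn.comp_continuous (hline z₀)
      fun θ => hsU z₀ (mem_of_mem_nhds hs) _ (hγ θ))).intervalIntegrable _ _
  · exact hweight.aestronglyMeasurable.smul
      ((measurable_fderiv ℂ f).comp (hline z₀).measurable).aestronglyMeasurable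
  · refine ae_of_all _ fun θ _ z hz => ?_
    rw [norm_smul, hnorm]
    exact mul_le_mul_of_nonneg_left (hC z hz _ (hγ θ)) (by positivity)
  · exact intervalIntegrable_const
  · refine ae_of_all _ fun θ _ z hz => ?_
    have hfz := (hf.differentiableAt (hU.mem_nhds (hsU z hz _ (hγ θ)))).hasFDerivAt
    exact (hfz.comp z ((hasFDerivAt_id z).add_const _)).const_smul
      (deriv (circleMap 0 R) θ • (circleMap 0 R θ ^ 2)⁻¹)

theorem differentiableAt_fderiv_apply_of_differentiableOn [FiniteDimensional ℂ E] {U : Set E}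
    (hf : DifferentiableOn ℂ f U) (hU : IsOpen U) {z₀ : E} (hz₀ : z₀ ∈ U) (v : E) :
    DifferentiableAt ℂ (fun z => fderiv ℂ f z v) z₀ := by
  obtain ⟨δ, hδ, hδU⟩ := nhds_basis_closedBall.mem_iff.1 (hU.mem_nhds hz₀)
  set ε := δ / 3 with hεδ
  have hε : 0 < ε := by positivity
  set R := ε / (‖v‖ + 1)
  have hR : 0 < R := by positivity
  have hRv : R * ‖v‖ ≤ ε := by
    rw [div_mul_eq_mul_div, div_le_iff₀ (by positivity)]
    nlinarith [norm_nonneg v]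
  have hnear : ∀ z ∈ ball z₀ ε, ∀ θ ∈ closedBall (0 : ℂ) R,
      closedBall (z + θ • v) ε ⊆ closedBall z₀ δ := by
    intro z hz θ hθ w hw
    rw [mem_closedBall] at hw hθ ⊢
    have hθv : dist (z + θ • v) z = ‖θ‖ * ‖v‖ := by rw [dist_self_add_left, norm_smul]
    have : ‖θ‖ * ‖v‖ ≤ ε :=
      (mul_le_mul_of_nonneg_right (by simpa using hθ) (norm_nonneg v)).trans hRv
    linarith [dist_triangle4 w (z + θ • v) z z₀, (mem_ball.1 hz).le, hεδ]
  have hline : ∀ z ∈ ball z₀ ε, ∀ θ ∈ closedBall (0 : ℂ) R, z + θ • v ∈ U :=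
    fun z hz θ hθ => hδU (hnear z hz θ hθ (mem_closedBall_self hε.le))
  obtain ⟨M, hM⟩ := (isCompact_closedBall z₀ δ).exists_bound_of_continuousOn
    (hf.continuousOn.mono hδU)
  have hC : ∀ z ∈ ball z₀ ε, ∀ θ ∈ sphere (0 : ℂ) R, ‖fderiv ℂ f (z + θ • v)‖ ≤ M / ε := by
    intro z hz θ hθ
    have hsub := hnear z hz θ (sphere_subset_closedBall hθ)
    exact norm_fderiv_le_of_forall_mem_closedBall_norm_le hε (hf.mono (hsub.trans hδU))
      fun w hw => hM w (hsub hw)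
  have hcauchy : (fun z => fderiv ℂ f z v) =ᶠ[𝓝 z₀]
      fun z => (2 * π * I : ℂ)⁻¹ • ∮ θ in C(0, R), (θ ^ 2)⁻¹ • f (z + θ • v) := by
    filter_upwards [ball_mem_nhds z₀ hε] with z hz
    exact fderiv_apply_eq_circleIntegral hU hf hR (hline z hz)
  rw [hcauchy.differentiableAt_iff]
  exact (hasFDerivAt_circleIntegral_comp_add_smul hU hf (ball_mem_nhds z₀ hε) hR
    (fun z hz θ hθ => hline z hz θ (sphere_subset_closedBall hθ))
    hC).differentiableAt.fun_const_smul _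

theorem DifferentiableOn.differentiableOn_fderiv [FiniteDimensional ℂ E] {U : Set E}
    (hf : DifferentiableOn ℂ f U) (hU : IsOpen U) : DifferentiableOn ℂ (fderiv ℂ f) U :=
  fun _ hz => (differentiableAt_clm_of_forall_apply
    (differentiableAt_fderiv_apply_of_differentiableOn hf hU hz)).differentiableWithinAt

end Osgood

section Graph

variable {ι : Type*} [Fintype ι]

noncomputable def complexOfReIm (ι : Type*) [Fintype ι] : (ι ⊕ ι → ℝ) →L[ℝ] (ι → ℂ) :=
  ContinuousLinearMap.pi fun i =>
    (ContinuousLinearMap.proj (Sum.inl i)).smulRight (1 : ℂ) +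
      (ContinuousLinearMap.proj (Sum.inr i)).smulRight I

@[simp]
theorem complexOfReIm_apply (r : ι ⊕ ι → ℝ) (i : ι) :
    complexOfReIm ι r i = r (Sum.inl i) + r (Sum.inr i) * I := by
  simp [complexOfReIm, real_smul]

variable [DecidableEq ι]

theorem complexOfReIm_single_inl (j : ι) :
    complexOfReIm ι (Pi.single (Sum.inl j) 1) = Pi.single j 1 := by
  ext i
  by_cases h : i = j <;> simp [h]

theorem complexOfReIm_single_inr (j : ι) :
    complexOfReIm ι (Pi.single (Sum.inr j) 1) = I • Pi.single j 1 := by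
  ext i
  by_cases h : i = j <;> simp [h]

/-- The graph `z ↦ (z, ∇H(z))` of the holomorphic gradient of `H`. -/
noncomputable def gradGraph (H : (ι → ℂ) → ℂ) (z : ι → ℂ) : ι ⊕ ι → ℂ :=
  Sum.elim z fun i => fderiv ℂ H z (Pi.single i 1)

theorem fderiv_im_comp_complexOfReIm {H : (ι → ℂ) → ℂ} {r : ι ⊕ ι → ℝ}
    (hH : DifferentiableAt ℂ H (complexOfReIm ι r)) (i : ι) :
    (fderiv ℝ (fun q => (H (complexOfReIm ι q)).im) r (Pi.single (Sum.inr i) 1) : ℂ) +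
        fderiv ℝ (fun q => (H (complexOfReIm ι q)).im) r (Pi.single (Sum.inl i) 1) * I =
      fderiv ℂ H (complexOfReIm ι r) (Pi.single i 1) := by
  have hD : HasFDerivAt (fun q => (H (complexOfReIm ι q)).im)
      (imCLM.comp (((fderiv ℂ H (complexOfReIm ι r)).restrictScalars ℝ).comp
        (complexOfReIm ι))) r :=
    imCLM.hasFDerivAt.comp r ((hH.hasFDerivAt.restrictScalars ℝ).comp r
      (complexOfReIm ι).hasFDerivAt)
  simp [hD.fderiv, complexOfReIm_single_inl, complexOfReIm_single_inr, mul_im, re_add_im]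

section Holomorphic

variable {H : (ι → ℂ) → ℂ} {U : Set (ι → ℂ)} {z : ι → ℂ}

theorem differentiableAt_gradGraph_apply (hH : DifferentiableOn ℂ H U) (hU : IsOpen U)
    (hz : z ∈ U) (k : ι ⊕ ι) : DifferentiableAt ℂ (fun z => gradGraph H z k) z := by
  rcases k with i | i
  · exact differentiableAt_apply i z
  · exact ((hH.differentiableOn_fderiv hU).differentiableAt (hU.mem_nhds hz)).clm_apply
      (differentiableAt_const _)

theorem differentiableAt_gradGraph (hH : DifferentiableOn ℂ H U) (hU : IsOpen U) (hz : z ∈ U) :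
    DifferentiableAt ℂ (gradGraph H) z :=
  differentiableAt_pi.2 (differentiableAt_gradGraph_apply hH hU hz)

theorem fderiv_gradGraph_apply (hH : DifferentiableOn ℂ H U) (hU : IsOpen U) (hz : z ∈ U)
    (v : ι → ℂ) : fderiv ℂ (gradGraph H) z v =
      Sum.elim v fun i => fderiv ℂ (fderiv ℂ H) z v (Pi.single i 1) := by
  have hH' := (hH.differentiableOn_fderiv hU).differentiableAt (hU.mem_nhds hz)
  have hcomp := differentiableAt_gradGraph_apply hH hU hz
  change fderiv ℂ (fun z k => gradGraph H z k) z v = _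
  rw [fderiv_pi hcomp]
  ext (i | i)
  · simp [gradGraph, (hasFDerivAt_apply i z).fderiv]
  · simp [gradGraph, fderiv_clm_apply hH' (differentiableAt_const _)]

end Holomorphic

end Graph

theorem sformC_sumElim_bilinear {n : ℕ} (B : (Fin n → ℂ) →L[ℂ] (Fin n → ℂ) →L[ℂ] ℂ)
    (v w : Fin n → ℂ) :
    sformC n (Sum.elim v fun i => B v (Pi.single i 1))
      (Sum.elim w fun i => B w (Pi.single i 1)) = B w v - B v w := by
  have hexpand : ∀ (T : (Fin n → ℂ) →L[ℂ] ℂ) (u : Fin n → ℂ),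
      T u = ∑ i, u i * T (Pi.single i 1) :=
    fun T u => by simpa using congrArg T (pi_eq_sum_univ' u)
  simp only [sformC, Sum.elim_inl, Sum.elim_inr, Finset.sum_sub_distrib, hexpand (B w) v,
    hexpand (B v) w, mul_comm (w _)]

theorem sformC_fderiv_gradGraph {n : ℕ} {H : (Fin n → ℂ) → ℂ} {U : Set (Fin n → ℂ)}
    {z : Fin n → ℂ} (hH : DifferentiableOn ℂ H U) (hU : IsOpen U) (hz : z ∈ U)
    (v w : Fin n → ℂ) :
    sformC n (fderiv ℂ (gradGraph H) z v) (fderiv ℂ (gradGraph H) z w) = 0 := by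
  have hsymm := second_derivative_symmetric_of_eventually
    (f := H) (f' := fderiv ℂ H) (Filter.eventually_of_mem (hU.mem_nhds hz) fun y hy =>
      (hH.differentiableAt (hU.mem_nhds hy)).hasFDerivAt)
    ((hH.differentiableOn_fderiv hU).differentiableAt (hU.mem_nhds hz)).hasFDerivAt
  rw [fderiv_gradGraph_apply hH hU hz, fderiv_gradGraph_apply hH hU hz, sformC_sumElim_bilinear,
    hsymm, sub_self]

theorem stmt12_general (n : ℕ)
    (U : Set (Fin n → ℂ)) (hU : IsOpen U)
    (H : (Fin n → ℂ) → ℂ) (hH : DifferentiableOn ℂ H U)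
    -- `Q(s,t) = Im H(s + it)`, with `s = r ∘ Sum.inl`, `t = r ∘ Sum.inr`
    (Q : (Fin n ⊕ Fin n → ℝ) → ℝ)
    (hQ : ∀ r, Q r = (H fun i => (r (Sum.inl i) : ℂ) + (r (Sum.inr i) : ℂ) * Complex.I).im)
    (W : Set (Fin n ⊕ Fin n → ℝ))
    (hW : W = {r | (fun i => (r (Sum.inl i) : ℂ) + (r (Sum.inr i) : ℂ) * Complex.I) ∈ U})
    -- `x(s,t) = (s, ∂Q/∂t)`, `y(s,t) = (t, ∂Q/∂s)`
    (x y : (Fin n ⊕ Fin n → ℝ) → (Fin n ⊕ Fin n → ℝ))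
    (hx : ∀ r, x r = Sum.elim (fun i => r (Sum.inl i))
      (fun i => fderiv ℝ Q r (Pi.single (Sum.inr i) 1)))
    (hy : ∀ r, y r = Sum.elim (fun i => r (Sum.inr i))
      (fun i => fderiv ℝ Q r (Pi.single (Sum.inl i) 1)))
    -- `η = x + i·y : W → ℂ^{2n}`
    (η : (Fin n ⊕ Fin n → ℝ) → (Fin n ⊕ Fin n → ℂ))
    (hη : ∀ r, η r = fun k => (x r k : ℂ) + (y r k : ℂ) * Complex.I) :
    ∀ r ∈ W,
      -- (i) the Cauchy–Riemann equations `∂η/∂t_j = i·∂η/∂s_j`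
      (∀ j : Fin n,
        fderiv ℝ η r (Pi.single (Sum.inr j) 1) =
          Complex.I • fderiv ℝ η r (Pi.single (Sum.inl j) 1)) ∧
      -- (ii) the image of `η` is `ω_ℂ`-Lagrangian
      (∀ j k : Fin n,
        sformC n (fderiv ℝ η r (Pi.single (Sum.inl j) 1))
          (fderiv ℝ η r (Pi.single (Sum.inl k) 1)) = 0) := by
  intro r hr
  set L := complexOfReIm (Fin n)
  have hL : ∀ q, L q = fun i => (q (Sum.inl i) : ℂ) + (q (Sum.inr i) : ℂ) * I :=
    fun q => funext (complexOfReIm_apply q)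
  have hQL : Q = fun q => (H (L q)).im := funext fun q => by rw [hQ, hL]
  have hWU : W = L ⁻¹' U := by ext q; rw [hW, Set.mem_preimage, hL]; rfl
  subst hWU
  have hηG : η =ᶠ[𝓝 r] gradGraph H ∘ L := by
    filter_upwards [(hU.preimage L.continuous).mem_nhds hr] with q hq
    ext (i | i)
    · simp [hη, hx, hy, gradGraph, L]
    · simpa [hη, hx, hy, hQL, gradGraph] using
        fderiv_im_comp_complexOfReIm (hH.differentiableAt (hU.mem_nhds hq)) i
  have hD : fderiv ℝ η r = ((fderiv ℂ (gradGraph H) (L r)).restrictScalars ℝ).comp L :=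
    hηG.fderiv_eq.trans
      (((differentiableAt_gradGraph hH hU hr).hasFDerivAt.restrictScalars ℝ).comp
        r L.hasFDerivAt).fderiv
  have hs : ∀ j, fderiv ℝ η r (Pi.single (Sum.inl j) 1) =
      fderiv ℂ (gradGraph H) (L r) (Pi.single j 1) := by
    simp [hD, L, complexOfReIm_single_inl]
  have ht : ∀ j, fderiv ℝ η r (Pi.single (Sum.inr j) 1) =
      I • fderiv ℂ (gradGraph H) (L r) (Pi.single j 1) := by
    simp [hD, L, complexOfReIm_single_inr]
  refine ⟨fun j => by rw [hs, ht], fun j k => ?_⟩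
  rw [hs, hs]
  exact sformC_fderiv_gradGraph hH hU hr _ _

theorem stmt12 (n : ℕ) (hn : 1 ≤ n)
    (U : Set (Fin n → ℂ)) (hU : IsOpen U)
    (H : (Fin n → ℂ) → ℂ) (hH : DifferentiableOn ℂ H U)
    -- `Q(s,t) = Im H(s + it)`, with `s = r ∘ Sum.inl`, `t = r ∘ Sum.inr`
    (Q : (Fin n ⊕ Fin n → ℝ) → ℝ)
    (hQ : ∀ r, Q r = (H fun i => (r (Sum.inl i) : ℂ) + (r (Sum.inr i) : ℂ) * Complex.I).im)
    (W : Set (Fin n ⊕ Fin n → ℝ))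
    (hW : W = {r | (fun i => (r (Sum.inl i) : ℂ) + (r (Sum.inr i) : ℂ) * Complex.I) ∈ U})
    -- `x(s,t) = (s, ∂Q/∂t)`, `y(s,t) = (t, ∂Q/∂s)`
    (x y : (Fin n ⊕ Fin n → ℝ) → (Fin n ⊕ Fin n → ℝ))
    (hx : ∀ r, x r = Sum.elim (fun i => r (Sum.inl i))
      (fun i => fderiv ℝ Q r (Pi.single (Sum.inr i) 1)))
    (hy : ∀ r, y r = Sum.elim (fun i => r (Sum.inr i))
      (fun i => fderiv ℝ Q r (Pi.single (Sum.inl i) 1)))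
    -- `η = x + i·y : W → ℂ^{2n}`
    (η : (Fin n ⊕ Fin n → ℝ) → (Fin n ⊕ Fin n → ℂ))
    (hη : ∀ r, η r = fun k => (x r k : ℂ) + (y r k : ℂ) * Complex.I) :
    ∀ r ∈ W,
      -- (i) the Cauchy–Riemann equations `∂η/∂t_j = i·∂η/∂s_j`
      (∀ j : Fin n,
        fderiv ℝ η r (Pi.single (Sum.inr j) 1) =
          Complex.I • fderiv ℝ η r (Pi.single (Sum.inl j) 1)) ∧
      -- (ii) the image of `η` is `ω_ℂ`-Lagrangian
      (∀ j k : Fin n,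
        sformC n (fderiv ℝ η r (Pi.single (Sum.inl j) 1))
          (fderiv ℝ η r (Pi.single (Sum.inl k) 1)) = 0) :=
  stmt12_general n U hU H hH Q hQ W hW x y hx hy η hη
end

section
/- Let n ≥ 1, let P, A ∈ GL(2n, ℝ), and let W := {(P·u, P·A·u) : u ∈ ℝ^{2n}} ⊆ ℝ^{2n} × ℝ^{2n}. Assume Ω vanishes identically on W, i.e. Ω(w, w') = 0 for all w, w' ∈ W. Then the following are equivalent: (1) Ω₁ vanishes identically on W; (2) W is invariant under the involution K(u,a) := (a,u), i.e. K(W) = W; (3) A² = I_{2n}; (4) A is similar to K_{2n}, i.e. there exists S ∈ GL(2n, ℝ) with A = S·K_{2n}·S^{-1}. -/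
open Matrix

/-- The symplectic form `Ω` on `ℝ^{2n} × ℝ^{2n}`:  `Ω((u,a),(v,b)) = ω(u,b) + ω(a,v)`. -/
noncomputable def OmegaForm (n : ℕ)
    (w w' : (Fin n ⊕ Fin n → ℝ) × (Fin n ⊕ Fin n → ℝ)) : ℝ :=
  sform n w.1 w'.2 + sform n w.2 w'.1

/-- The form `Ω₁((u,a),(v,b)) = ω(u,v) + ω(a,b)` on `ℝ^{2n} × ℝ^{2n}`. -/
noncomputable def Omega1Form (n : ℕ)
    (w w' : (Fin n ⊕ Fin n → ℝ) × (Fin n ⊕ Fin n → ℝ)) : ℝ :=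
  sform n w.1 w'.1 + sform n w.2 w'.2

/-!
Put `M = Pᵀ J P`, the Gram matrix of `ω` in the coordinates `u ↦ P u`; it is invertible. On
`W`, `Ω` has Gram matrix `M A + Aᵀ M` and `Ω₁` has Gram matrix `M + Aᵀ M A`. So the hypothesis says
`Aᵀ M = -M A`, and then `M + Aᵀ M A = M (1 - A²)` vanishes iff `A² = 1`. Since `P` is injective,
`(u, a) ↦ (a, u)` preserves `W` iff `A² = 1` as well. Finally `Aᵀ = -M A M⁻¹` forces `tr A = 0`,
so an involution `A` has `±1`-eigenspaces of the same dimension `n`, i.e. it is similar to `K`.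
-/

open Module

namespace Module.End

variable {K V : Type*} [Field K] [CharZero K] [AddCommGroup V] [Module K V] {f : End K V}

theorem isIdempotentElem_half_one_add (hf : f * f = 1) :
    IsIdempotentElem ((2⁻¹ : K) • (1 + f)) := by
  have hff (x : V) : f (f x) = x := LinearMap.congr_fun hf x
  ext x
  simp only [mul_apply, LinearMap.smul_apply, LinearMap.add_apply, one_apply, map_smul, map_add,
    hff]
  module

theorem mem_ker_half_one_add {x : V} : x ∈ LinearMap.ker ((2⁻¹ : K) • (1 + f)) ↔ f x = -x := by
  simp [-smul_add, eq_neg_iff_add_eq_zero, add_comm (f x)]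

theorem mem_range_half_one_add (hf : f * f = 1) {x : V} :
    x ∈ LinearMap.range ((2⁻¹ : K) • (1 + f)) ↔ f x = x := by
  rw [LinearMap.IsIdempotentElem.mem_range_iff (isIdempotentElem_half_one_add hf)]
  simp only [LinearMap.smul_apply, LinearMap.add_apply, one_apply]
  rw [inv_smul_eq_iff₀ two_ne_zero, two_smul, add_right_inj]

theorem two_mul_finrank_range_half_one_add [FiniteDimensional K V] (hf : f * f = 1)
    (htr : LinearMap.trace K V f = 0) :
    2 * finrank K (LinearMap.range ((2⁻¹ : K) • (1 + f))) = finrank K V := by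
  have h := (LinearMap.IsIdempotentElem.isProj_range _ (isIdempotentElem_half_one_add hf)).trace
  rw [map_smul, map_add, LinearMap.trace_one, htr, add_zero, smul_eq_mul] at h
  exact_mod_cast (eq_inv_mul_iff_mul_eq₀ two_ne_zero).1 h.symm

theorem exists_basis_toMatrix_eq_fromBlocks [FiniteDimensional K V] {n : ℕ}
    (hV : finrank K V = 2 * n) (hf : f * f = 1) (htr : LinearMap.trace K V f = 0) :
    ∃ b : Basis (Fin n ⊕ Fin n) K V, LinearMap.toMatrix b b f = Matrix.fromBlocks (-1) 0 0 1 := by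
  have hrange : finrank K (LinearMap.range ((2⁻¹ : K) • (1 + f))) = n := by
    have := two_mul_finrank_range_half_one_add hf htr; omega
  set e : End K V := (2⁻¹ : K) • (1 + f)
  have he : IsIdempotentElem e := isIdempotentElem_half_one_add hf
  have hker : finrank K (LinearMap.ker e) = n := by
    have := e.finrank_range_add_finrank_ker; omega
  let b : Basis (Fin n ⊕ Fin n) K V :=
    (((finBasisOfFinrankEq K _ hker).prod (finBasisOfFinrankEq K _ hrange)).map
      (Submodule.prodEquivOfIsCompl _ _ (LinearMap.IsIdempotentElem.isCompl he).symm))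
  have hneg (i : Fin n) : f (b (.inl i)) = -b (.inl i) := by
    simpa [b] using mem_ker_half_one_add.1 (finBasisOfFinrankEq K _ hker i).2
  have hpos (i : Fin n) : f (b (.inr i)) = b (.inr i) := by
    simpa [b] using (mem_range_half_one_add hf).1 (finBasisOfFinrankEq K _ hrange i).2
  refine ⟨b, ?_⟩
  ext (i | i) (j | j) <;> simp [LinearMap.toMatrix_apply, hneg, hpos, Finsupp.single_apply,
    Matrix.one_apply, eq_comm]

end Module.End

namespace Matrix

variable {K : Type*} [Field K] [CharZero K]

theorem exists_isUnit_det_eq_mul_fromBlocks_mul_inv {n : ℕ}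
    {A : Matrix (Fin n ⊕ Fin n) (Fin n ⊕ Fin n) K} (hA : A * A = 1) (htr : A.trace = 0) :
    ∃ S : Matrix (Fin n ⊕ Fin n) (Fin n ⊕ Fin n) K,
      IsUnit S.det ∧ A = S * fromBlocks (-1) 0 0 1 * S⁻¹ := by
  obtain ⟨b, hb⟩ := Module.End.exists_basis_toMatrix_eq_fromBlocks (f := toLin' A) (n := n)
    (by simp [two_mul])
    (by rw [Module.End.mul_eq_comp, ← toLin'_mul, hA, toLin'_one, Module.End.one_eq_id])
    (by rwa [LinearMap.trace_eq_matrix_trace K (Pi.basisFun K _), LinearMap.toMatrix_eq_toMatrix',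
      LinearMap.toMatrix'_toLin'])
  have hinv := (Pi.basisFun K (Fin n ⊕ Fin n)).toMatrix_mul_toMatrix_flip b
  refine ⟨_, isUnit_det_of_right_inverse hinv, ?_⟩
  rw [inv_eq_right_inv hinv, ← hb, basis_toMatrix_mul_linearMap_toMatrix_mul_basis_toMatrix,
    LinearMap.toMatrix_eq_toMatrix', LinearMap.toMatrix'_toLin']

theorem trace_eq_zero_of_mul_add_transpose_mul_eq_zero {m : Type*} [Fintype m] [DecidableEq m]
    {A M : Matrix m m K} (hM : IsUnit M.det) (hA : M * A + Aᵀ * M = 0) : A.trace = 0 := by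
  have : A = -(M⁻¹ * Aᵀ * M) := by
    rw [Matrix.mul_assoc, eq_neg_of_add_eq_zero_right hA, mul_neg, neg_neg, ← Matrix.mul_assoc,
      nonsing_inv_mul M hM, Matrix.one_mul]
  have h : A.trace = -A.trace := by
    conv_lhs => rw [this]
    rw [trace_neg, trace_mul_cycle, mul_nonsing_inv M hM, Matrix.one_mul, trace_transpose]
  exact CharZero.eq_neg_self_iff.1 h

end Matrix

namespace Matrix

variable {m K : Type*} [Fintype m] [DecidableEq m] [Field K]

theorem eq_zero_iff_forall_dotProduct_mulVec {N : Matrix m m K} :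
    N = 0 ↔ ∀ u v : m → K, u ⬝ᵥ N *ᵥ v = 0 := by
  refine ⟨fun h u v => by simp [h], fun h => ?_⟩
  ext i j
  simpa [mulVec_single_one, single_one_dotProduct] using h (Pi.single i 1) (Pi.single j 1)

theorem add_transpose_mul_mul_eq_zero_iff {A M : Matrix m m K} (hM : IsUnit M.det)
    (hA : M * A + Aᵀ * M = 0) : M + Aᵀ * M * A = 0 ↔ A * A = 1 := by
  rw [eq_neg_of_add_eq_zero_right hA, neg_mul, Matrix.mul_assoc, ← sub_eq_add_neg, sub_eq_zero,
    eq_comm]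
  constructor
  · intro h
    simpa [← Matrix.mul_assoc, nonsing_inv_mul M hM] using congrArg (M⁻¹ * ·) h
  · intro h
    rw [h, Matrix.mul_one]

theorem conj_mul_self_eq_one {S B : Matrix m m K} (hS : IsUnit S.det) (hB : B * B = 1) :
    S * B * S⁻¹ * (S * B * S⁻¹) = 1 := by
  calc S * B * S⁻¹ * (S * B * S⁻¹) = S * B * (S⁻¹ * S) * B * S⁻¹ := by simp only [Matrix.mul_assoc]
    _ = 1 := by rw [nonsing_inv_mul S hS, Matrix.mul_one, Matrix.mul_assoc S, hB, Matrix.mul_one,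
      mul_nonsing_inv S hS]

end Matrix

theorem swap_image_graph_eq_iff {α β : Type*} {p : α → β} (hp : p.Injective) (a : α → α) :
    (fun w : β × β => (w.2, w.1)) '' {w | ∃ u, w = (p u, p (a u))} =
      {w | ∃ u, w = (p u, p (a u))} ↔ ∀ u, a (a u) = u := by
  constructor
  · intro h u
    obtain ⟨v, hv⟩ : (p (a u), p u) ∈ {w | ∃ u, w = (p u, p (a u))} :=
      h ▸ ⟨_, ⟨u, rfl⟩, rfl⟩
    simp only [Prod.mk.injEq, hp.eq_iff] at hv
    rw [hv.1, hv.2]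
  · intro h
    ext w
    constructor
    · rintro ⟨_, ⟨u, rfl⟩, rfl⟩
      exact ⟨a u, by rw [h]⟩
    · rintro ⟨u, rfl⟩
      exact ⟨_, ⟨a u, rfl⟩, by rw [h]⟩

noncomputable def Jmat (n : ℕ) : Matrix (Fin n ⊕ Fin n) (Fin n ⊕ Fin n) ℝ :=
  fromBlocks 0 1 (-1) 0

theorem isUnit_det_Jmat (n : ℕ) : IsUnit (Jmat n).det := by
  refine isUnit_det_of_right_inverse (B := -Jmat n) ?_
  rw [Jmat, fromBlocks_neg, fromBlocks_multiply, ← fromBlocks_one]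
  simp

theorem sform_eq_dotProduct_mulVec (n : ℕ) (u v : Fin n ⊕ Fin n → ℝ) :
    sform n u v = u ⬝ᵥ Jmat n *ᵥ v := by
  simp [sform, Jmat, dotProduct, Fintype.sum_sum_type, Finset.sum_add_distrib, mulVec, one_apply,
    sub_eq_add_neg]

theorem sform_mulVec_mulVec (n : ℕ) (X Y : Matrix (Fin n ⊕ Fin n) (Fin n ⊕ Fin n) ℝ)
    (u v : Fin n ⊕ Fin n → ℝ) :
    sform n (X *ᵥ u) (Y *ᵥ v) = u ⬝ᵥ (Xᵀ * Jmat n * Y) *ᵥ v := by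
  rw [sform_eq_dotProduct_mulVec, dotProduct_mulVec, ← vecMul_transpose, vecMul_vecMul,
    ← dotProduct_mulVec, mulVec_mulVec, Matrix.mul_assoc]

section Graph

variable {n : ℕ} (P A : Matrix (Fin n ⊕ Fin n) (Fin n ⊕ Fin n) ℝ)

theorem omegaForm_graph_eq_zero_iff :
    (∀ w ∈ {w | ∃ u, w = (P *ᵥ u, P *ᵥ A *ᵥ u)}, ∀ w' ∈ {w | ∃ u, w = (P *ᵥ u, P *ᵥ A *ᵥ u)},
      OmegaForm n w w' = 0) ↔ Pᵀ * Jmat n * P * A + Aᵀ * (Pᵀ * Jmat n * P) = 0 := by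
  simp only [Set.mem_ofPred_eq, forall_exists_index, forall_eq_apply_imp_iff, OmegaForm,
    mulVec_mulVec, sform_mulVec_mulVec, ← dotProduct_add, ← add_mulVec,
    eq_zero_iff_forall_dotProduct_mulVec, transpose_mul, Matrix.mul_assoc]

theorem omega1Form_graph_eq_zero_iff :
    (∀ w ∈ {w | ∃ u, w = (P *ᵥ u, P *ᵥ A *ᵥ u)}, ∀ w' ∈ {w | ∃ u, w = (P *ᵥ u, P *ᵥ A *ᵥ u)},
      Omega1Form n w w' = 0) ↔ Pᵀ * Jmat n * P + Aᵀ * (Pᵀ * Jmat n * P) * A = 0 := by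
  simp only [Set.mem_ofPred_eq, forall_exists_index, forall_eq_apply_imp_iff, Omega1Form,
    mulVec_mulVec, sform_mulVec_mulVec, ← dotProduct_add, ← add_mulVec,
    eq_zero_iff_forall_dotProduct_mulVec, transpose_mul, Matrix.mul_assoc]

end Graph

theorem stmt13_general (n : ℕ)
    (P A : Matrix (Fin n ⊕ Fin n) (Fin n ⊕ Fin n) ℝ)
    (hP : IsUnit P.det)
    (W : Set ((Fin n ⊕ Fin n → ℝ) × (Fin n ⊕ Fin n → ℝ)))
    (hW : W = {w | ∃ u : Fin n ⊕ Fin n → ℝ, w = (P.mulVec u, P.mulVec (A.mulVec u))})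
    (hΩ : ∀ w ∈ W, ∀ w' ∈ W, OmegaForm n w w' = 0) :
    List.TFAE
      [ ∀ w ∈ W, ∀ w' ∈ W, Omega1Form n w w' = 0,
        (fun w : (Fin n ⊕ Fin n → ℝ) × (Fin n ⊕ Fin n → ℝ) => (w.2, w.1)) '' W = W,
        A * A = 1,
        ∃ S : Matrix (Fin n ⊕ Fin n) (Fin n ⊕ Fin n) ℝ,
          IsUnit S.det ∧ A = S * Kmat n * S⁻¹ ] := by
  subst hW
  have hM : IsUnit (Pᵀ * Jmat n * P).det := by
    rw [det_mul, det_mul, det_transpose]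
    exact (hP.mul (isUnit_det_Jmat n)).mul hP
  have hMA := (omegaForm_graph_eq_zero_iff P A).1 hΩ
  have hPinj : Function.Injective P.mulVec :=
    mulVec_injective_iff_isUnit.2 ((isUnit_iff_isUnit_det P).2 hP)
  tfae_have 1 ↔ 3 :=
    (omega1Form_graph_eq_zero_iff P A).trans (add_transpose_mul_mul_eq_zero_iff hM hMA)
  tfae_have 2 ↔ 3 :=
    (swap_image_graph_eq_iff hPinj _).trans (by simp [ext_iff_mulVec, mulVec_mulVec])
  tfae_have 3 → 4 := fun hA2 => exists_isUnit_det_eq_mul_fromBlocks_mul_inv hA2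
    (trace_eq_zero_of_mul_add_transpose_mul_eq_zero hM hMA)
  tfae_have 4 → 3 := fun ⟨S, hS, hA⟩ =>
    hA ▸ conj_mul_self_eq_one hS (by simp [Kmat, fromBlocks_multiply])
  tfae_finish

theorem stmt13 (n : ℕ) (hn : 1 ≤ n)
    (P A : Matrix (Fin n ⊕ Fin n) (Fin n ⊕ Fin n) ℝ)
    (hP : IsUnit P.det) (hA : IsUnit A.det)
    (W : Set ((Fin n ⊕ Fin n → ℝ) × (Fin n ⊕ Fin n → ℝ)))
    (hW : W = {w | ∃ u : Fin n ⊕ Fin n → ℝ, w = (P.mulVec u, P.mulVec (A.mulVec u))})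
    (hΩ : ∀ w ∈ W, ∀ w' ∈ W, OmegaForm n w w' = 0) :
    List.TFAE
      [ ∀ w ∈ W, ∀ w' ∈ W, Omega1Form n w w' = 0,
        (fun w : (Fin n ⊕ Fin n → ℝ) × (Fin n ⊕ Fin n → ℝ) => (w.2, w.1)) '' W = W,
        A * A = 1,
        ∃ S : Matrix (Fin n ⊕ Fin n) (Fin n ⊕ Fin n) ℝ,
          IsUnit S.det ∧ A = S * Kmat n * S⁻¹ ] :=
  stmt13_general n P A hP W hW hΩ
end

section
/- Let n ≥ 1, let V ⊆ ℝ^{2n} be open, let F : V → ℝ be C², and let L : V → ℝ^{2n} × ℝ^{2n} be the Lagrangian lift L(x) = (x, Y_F(x)). Then for every x ∈ V, the following are equivalent: (a) L pulls back Ω₁ to zero at x, i.e. Ω₁((u, DY_F(x)u), (v, DY_F(x)v)) = 0 for all u, v ∈ ℝ^{2n}; (b) (DY_F(x))² = I_{2n}. (This is the analytic content of the theorem that the solutions of the exterior differential system {Ω, Ω₁} are exactly the center-chord improper affine spheres.) -/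
open Matrix

/-! Since `Y_F = J ∇F`, its Jacobian is `B = J H` with `H` the symmetric Hessian of `F`. The
pullback of `Ω₁` along `u ↦ (u, B u)` has Gram matrix `-(J + Bᵀ J B) = -(J + H J H)`, while
`B² = J (H J H)`; as `J⁻¹ = -J`, both conditions say `H J H = -J`. -/

section SymplecticAlgebra

variable {l m R : Type*} [Fintype l] [DecidableEq l] [Fintype m] [CommRing R]

theorem forall_dotProduct_mulVec_eq_zero_iff {A : Matrix l m R} [DecidableEq m] :
    (∀ u v, u ⬝ᵥ A *ᵥ v = 0) ↔ A = 0 := by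
  refine ⟨fun h => ?_, fun h u v => by simp [h]⟩
  ext i j
  simpa [mulVec_single_one, single_one_dotProduct] using h (Pi.single i 1) (Pi.single j 1)

theorem add_transpose_mul_mul_eq_zero_iff_mul_self_eq_one {J H : Matrix l l R}
    (hJt : Jᵀ = -J) (hJ2 : J * J = -1) (hH : Hᵀ = H) :
    J + (J * H)ᵀ * J * (J * H) = 0 ↔ J * H * (J * H) = 1 := by
  have hpull : (J * H)ᵀ * J * (J * H) = H * J * H := by
    rw [transpose_mul, hH, hJt]
    calc H * -J * J * (J * H) = -(H * (J * J) * J * H) := by noncomm_ring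
      _ = H * J * H := by rw [hJ2]; noncomm_ring
  have hsq : J * H * (J * H) = J * (H * J * H) := by noncomm_ring
  rw [hpull, hsq]
  constructor
  · intro h
    rw [eq_neg_of_add_eq_zero_right h, mul_neg, hJ2, neg_neg]
  · intro h
    have hHJH : H * J * H = -J :=
      calc H * J * H = -(J * J) * (H * J * H) := by rw [hJ2, neg_neg, one_mul]
        _ = -J * (J * (H * J * H)) := by noncomm_ring
        _ = -J := by rw [h, mul_one]
    rw [hHJH, add_neg_cancel]

end SymplecticAlgebra

theorem sform_eq_neg_dotProduct_J (n : ℕ) (u v : Fin n ⊕ Fin n → ℝ) :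
    sform n u v = -(u ⬝ᵥ J (Fin n) ℝ *ᵥ v) := by
  simp only [sform, J, dotProduct, fromBlocks_mulVec, zero_mulVec, neg_mulVec, one_mulVec,
    zero_add, add_zero, Fintype.sum_sum_type, Sum.elim_inl, Sum.elim_inr, Pi.neg_apply,
    Function.comp_apply, mul_neg, mul_comm, Finset.sum_sub_distrib, Finset.sum_neg_distrib,
    neg_add_rev, neg_neg]
  ring

theorem Omega1Form_graph_eq (n : ℕ) (B : Matrix (Fin n ⊕ Fin n) (Fin n ⊕ Fin n) ℝ)
    (u v : Fin n ⊕ Fin n → ℝ) :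
    Omega1Form n (u, B *ᵥ u) (v, B *ᵥ v) = -(u ⬝ᵥ (J (Fin n) ℝ + Bᵀ * J (Fin n) ℝ * B) *ᵥ v) := by
  simp only [Omega1Form, sform_eq_neg_dotProduct_J, add_mulVec, dotProduct_add, neg_add,
    ← mulVec_mulVec, dotProduct_mulVec _ Bᵀ, vecMul_transpose]

section Jacobian

variable {ι κ ν : Type*} [Fintype ι] [DecidableEq ι] [Fintype κ] [Fintype ν]

noncomputable def partialDerivs (F : (ι → ℝ) → ℝ) (y : ι → ℝ) : ι → ℝ :=
  fun i => fderiv ℝ F y (Pi.single i 1)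

theorem jacM_mulVec_comp {g : (ι → ℝ) → κ → ℝ} {x : ι → ℝ} (A : Matrix ν κ ℝ)
    (hg : DifferentiableAt ℝ g x) : jacM (fun y => A *ᵥ g y) x = A * jacM g x := by
  have hA : HasFDerivAt (fun y => A *ᵥ g y)
      ((LinearMap.toContinuousLinearMap (mulVecLin A)).comp (fderiv ℝ g x)) x :=
    (LinearMap.toContinuousLinearMap (mulVecLin A)).hasFDerivAt.comp (g := _) x hg.hasFDerivAt
  ext i j
  simp [jacM, hA.fderiv, mulVec, dotProduct, mul_apply]

theorem hasFDerivAt_partialDerivs {F : (ι → ℝ) → ℝ} {x : ι → ℝ}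
    (hF : DifferentiableAt ℝ (fderiv ℝ F) x) :
    HasFDerivAt (partialDerivs F) (ContinuousLinearMap.pi fun i =>
      (ContinuousLinearMap.apply ℝ ℝ (Pi.single i 1)).comp (fderiv ℝ (fderiv ℝ F) x)) x :=
  hasFDerivAt_pi.2 fun i =>
    (ContinuousLinearMap.apply ℝ ℝ (Pi.single i 1)).hasFDerivAt.comp (f := fderiv ℝ F) x
      hF.hasFDerivAt

theorem jacM_partialDerivs_transpose {F : (ι → ℝ) → ℝ} {x : ι → ℝ} (hF : ContDiffAt ℝ 2 F x) :
    (jacM (partialDerivs F) x)ᵀ = jacM (partialDerivs F) x := by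
  have hFd : DifferentiableAt ℝ (fderiv ℝ F) x :=
    (hF.fderiv_right (m := 1) (by norm_num)).differentiableAt (by norm_num)
  ext i j
  simp only [transpose_apply, jacM, of_apply, (hasFDerivAt_partialDerivs hFd).fderiv]
  exact (hF.isSymmSndFDerivAt (by norm_num)).eq _ _

end Jacobian

theorem hamVF_eq_J_mulVec (n : ℕ) (F : (Fin n ⊕ Fin n → ℝ) → ℝ) (y : Fin n ⊕ Fin n → ℝ) :
    hamVF n F y = J (Fin n) ℝ *ᵥ partialDerivs F y := by
  ext (i | i) <;> simp [hamVF, partialDerivs, J, fromBlocks_mulVec, neg_mulVec]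

theorem jacM_hamVF {n : ℕ} {F : (Fin n ⊕ Fin n → ℝ) → ℝ} {x : Fin n ⊕ Fin n → ℝ}
    (hF : DifferentiableAt ℝ (fderiv ℝ F) x) :
    jacM (hamVF n F) x = J (Fin n) ℝ * jacM (partialDerivs F) x := by
  simp_rw [funext (hamVF_eq_J_mulVec n F)]
  exact jacM_mulVec_comp _ (hasFDerivAt_partialDerivs hF).differentiableAt

theorem stmt18_general (n : ℕ) (V : Set (Fin n ⊕ Fin n → ℝ)) (hV : IsOpen V)
    (F : (Fin n ⊕ Fin n → ℝ) → ℝ) (hF : ContDiffOn ℝ 2 F V) :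
    ∀ x ∈ V,
      ((∀ u v : Fin n ⊕ Fin n → ℝ,
        Omega1Form n (u, (jacM (hamVF n F) x).mulVec u)
          (v, (jacM (hamVF n F) x).mulVec v) = 0) ↔
      jacM (hamVF n F) x * jacM (hamVF n F) x = 1) := by
  intro x hx
  have hF2 : ContDiffAt ℝ 2 F x := hF.contDiffAt (hV.mem_nhds hx)
  rw [jacM_hamVF ((hF2.fderiv_right (m := 1) (by norm_num)).differentiableAt (by norm_num))]
  simp_rw [Omega1Form_graph_eq, neg_eq_zero, forall_dotProduct_mulVec_eq_zero_iff]
  exact add_transpose_mul_mul_eq_zero_iff_mul_self_eq_one (J_transpose _ _) (J_squared _ _)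
    (jacM_partialDerivs_transpose hF2)

theorem stmt18 (n : ℕ) (hn : 1 ≤ n) (V : Set (Fin n ⊕ Fin n → ℝ)) (hV : IsOpen V)
    (F : (Fin n ⊕ Fin n → ℝ) → ℝ) (hF : ContDiffOn ℝ 2 F V) :
    ∀ x ∈ V,
      ((∀ u v : Fin n ⊕ Fin n → ℝ,
        Omega1Form n (u, (jacM (hamVF n F) x).mulVec u)
          (v, (jacM (hamVF n F) x).mulVec v) = 0) ↔
      jacM (hamVF n F) x * jacM (hamVF n F) x = 1) :=
  stmt18_general n V hV F hF
end
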